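/- arXiv:1311.0142 — 2 statements merged into one kernel-verified Lean document; each statement's English description precedes it below -/
import Mathlib

section
/- The set of all functions in C_ℝ(J) that are differentiable at no point of J is residual in C_ℝ(J), i.e. it contains a subset that is a countable intersection of open sets and is dense in C_ℝ(J). -/
open Set Filter

namespace BM

noncomputable def φ (x : ℝ) : ℝ := |x - round x|

lemma φ_nonneg (x : ℝ) : 0 ≤ φ x := abs_nonneg _

lemma φ_le_half (x : ℝ) : φ x ≤ 1 / 2 := abs_sub_round x

lemma φ_lip (x y : ℝ) : |φ x - φ y| ≤ |x - y| := by
  have h1 : φ x ≤ |x - y| + φ y := by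
    calc φ x ≤ |x - (round y : ℝ)| := round_le x (round y)
    _ = |(x - y) + (y - round y)| := by ring_nf
    _ ≤ |x - y| + |y - round y| := abs_add_le _ _
  have h2 : φ y ≤ |x - y| + φ x := by
    calc φ y ≤ |y - (round x : ℝ)| := round_le y (round x)
    _ = |(y - x) + (x - round x)| := by ring_nf
    _ ≤ |y - x| + |x - round x| := abs_add_le _ _
    _ = |x - y| + φ x := by rw [abs_sub_comm]; rfl
  rw [abs_sub_le_iff]; constructor <;> [skip; skip] <;> unfold φ at * <;> linarith

lemma φ_cont : Continuous φ := by
  have : LipschitzWith 1 φ := by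
    apply LipschitzWith.of_dist_le_mul
    intro x y
    simpa [Real.dist_eq] using φ_lip x y
  exact this.continuous

lemma φ_eq_left {k : ℤ} {x : ℝ} (h1 : (k : ℝ) ≤ x) (h2 : x ≤ k + 1 / 2) :
    φ x = x - k := by
  rcases lt_or_eq_of_le h2 with h2' | h2'
  · have : round x = k := by
      rw [round_eq, Int.floor_eq_iff]
      constructor <;> push_cast <;> linarith
    rw [φ, this, abs_of_nonneg (by linarith)]
  · have : round x = k + 1 := by
      rw [round_eq, h2']
      norm_num
      rw [show (k : ℝ) + 1 / 2 + 1 / 2 = ((k + 1 : ℤ) : ℝ) by push_cast; ring, Int.floor_intCast]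
    rw [φ, this, h2']
    push_cast
    rw [abs_of_nonpos (by linarith)]
    ring

lemma φ_eq_right {k : ℤ} {x : ℝ} (h1 : (k : ℝ) + 1 / 2 ≤ x) (h2 : x ≤ k + 1) :
    φ x = (k : ℝ) + 1 - x := by
  have : round x = k + 1 := by
    rw [round_eq, Int.floor_eq_iff]
    constructor <;> push_cast <;> linarith
  rw [φ, this]
  push_cast
  rw [abs_of_nonpos (by linarith)]
  ring

lemma φ_even (x : ℝ) : φ (-x) = φ x := by
  have h1 : φ (-x) ≤ φ x := by
    calc φ (-x) ≤ |(-x) - ((-(round x) : ℤ) : ℝ)| := round_le _ _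
    _ = |x - round x| := by push_cast; rw [show -x - -(round x : ℝ) = -(x - round x) by ring, abs_neg]
  have h2 : φ x ≤ φ (-x) := by
    calc φ x ≤ |x - ((-(round (-x)) : ℤ) : ℝ)| := round_le _ _
    _ = |(-x) - round (-x)| := by push_cast; rw [show x - -(round (-x) : ℝ) = -(-x - round (-x)) by ring, abs_neg]
  linarith

lemma exists_right (θ : ℝ) : ∃ y, θ < y ∧ y ≤ θ + 1 / 2 ∧ |φ y - φ θ| = y - θ := by
  set m := ⌊2 * θ⌋ with hm
  have hml : (m : ℝ) ≤ 2 * θ := Int.floor_le _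
  have hmu : 2 * θ < m + 1 := Int.lt_floor_add_one _
  rcases Int.even_or_odd m with ⟨k, hk⟩ | ⟨k, hk⟩
  · -- m = 2k : θ ∈ [k, k+1/2)
    have hkr : (m : ℝ) = 2 * k := by rw [hk]; push_cast; ring
    refine ⟨(k : ℝ) + 1 / 2, by linarith [hkr ▸ hmu], by linarith [hkr ▸ hml], ?_⟩
    have e1 : φ ((k : ℝ) + 1 / 2) = (k : ℝ) + 1 / 2 - k :=
      φ_eq_left (k := k) (by linarith) le_rfl
    have e2 : φ θ = θ - k :=
      φ_eq_left (k := k) (by linarith [hkr ▸ hml]) (by linarith [hkr ▸ hmu])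
    rw [e1, e2, abs_of_nonneg (by linarith [hkr ▸ hmu])]
    ring
  · -- m = 2k+1 : θ ∈ [k+1/2, k+1)
    have hkr : (m : ℝ) = 2 * k + 1 := by rw [hk]; push_cast; ring
    refine ⟨(k : ℝ) + 1, by linarith [hkr ▸ hmu], by linarith [hkr ▸ hml], ?_⟩
    have e1 : φ ((k : ℝ) + 1) = (k : ℝ) + 1 - ((k:ℝ) + 1) :=
      φ_eq_right (k := k) (by linarith) le_rfl
    have e2 : φ θ = (k : ℝ) + 1 - θ :=
      φ_eq_right (k := k) (by linarith [hkr ▸ hml]) (by linarith [hkr ▸ hmu])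
    rw [e1, e2, show (k:ℝ) + 1 - ((k:ℝ)+1) - ((k:ℝ) + 1 - θ) = -(((k:ℝ)+1) - θ) by ring, abs_neg,
      abs_of_nonneg (by linarith [hkr ▸ hmu])]

lemma exists_left (θ : ℝ) : ∃ y, θ - 1 / 2 ≤ y ∧ y < θ ∧ |φ y - φ θ| = θ - y := by
  obtain ⟨u, hu1, hu2, hu3⟩ := exists_right (-θ)
  refine ⟨-u, by linarith, by linarith, ?_⟩
  rw [φ_even] at hu3
  rw [φ_even, abs_sub_comm]
  rw [abs_sub_comm] at hu3
  linarith


def E (a b : ℝ) (n : ℕ) : Set C(Set.Icc a b, ℝ) :=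
  {f | ∃ θ : Set.Icc a b, ∀ y : Set.Icc a b, |f y - f θ| ≤ n * |(y : ℝ) - (θ : ℝ)|}

lemma isClosed_E (a b : ℝ) (hab : a < b) (n : ℕ) : IsClosed (E a b n) := by
  have hne : Nonempty (Set.Icc a b) := ⟨⟨a, le_refl a, hab.le⟩⟩
  set F : Set (C(Set.Icc a b, ℝ) × Set.Icc a b) :=
    {p | ∀ y : Set.Icc a b, |p.1 y - p.1 p.2| ≤ n * |(y : ℝ) - (p.2 : ℝ)|} with hFdef
  have hF : IsClosed F := by
    have : F = ⋂ y : Set.Icc a b,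
        {p : C(Set.Icc a b, ℝ) × Set.Icc a b |
          |p.1 y - p.1 p.2| ≤ n * |(y : ℝ) - (p.2 : ℝ)|} := by
      ext p; simp [hFdef]
    rw [this]
    apply isClosed_iInter
    intro y
    apply isClosed_le
    · apply Continuous.abs
      apply Continuous.sub
      · exact (continuous_eval_const y).comp continuous_fst
      · exact continuous_eval
    · apply Continuous.mul continuous_const
      apply Continuous.abs
      exact continuous_const.sub (continuous_subtype_val.comp continuous_snd)
  have himg : E a b n = Prod.fst '' F := by
    ext f
    constructor
    · rintro ⟨θ, hθ⟩
      exact ⟨(f, θ), hθ, rfl⟩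
    · rintro ⟨⟨g, θ⟩, hp, rfl⟩
      exact ⟨θ, hp⟩
  rw [himg]
  exact isClosedMap_fst_of_compactSpace _ hF


set_option maxHeartbeats 2000000 in
lemma dense_compl_E (a b : ℝ) (hab : a < b) (n : ℕ) : Dense (E a b n)ᶜ := by
  rw [Metric.dense_iff]
  intro f ε hε
  have hba : 0 < b - a := by linarith
  obtain ⟨p, hp⟩ := exists_polynomial_near_continuousMap a b f (ε / 2) (by positivity)
  set pC := p.toContinuousMapOn (Set.Icc a b) with hpC
  obtain ⟨M0, hM0⟩ := (isCompact_Icc (a := a) (b := b)).exists_bound_of_continuousOn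
      (f := fun x => Polynomial.eval x (Polynomial.derivative p))
      (Polynomial.continuous _).continuousOn
  set M := max M0 0 with hMdef
  have hM : ∀ x ∈ Set.Icc a b, ‖Polynomial.eval x (Polynomial.derivative p)‖ ≤ M :=
    fun x hx => (hM0 x hx).trans (le_max_left _ _)
  have hMnn : 0 ≤ M := le_max_right _ _
  have hplip : ∀ x ∈ Set.Icc a b, ∀ y ∈ Set.Icc a b,
      |Polynomial.eval y p - Polynomial.eval x p| ≤ M * |y - x| := by
    intro x hx y hy
    have := Convex.norm_image_sub_le_of_norm_deriv_le (f := fun t => Polynomial.eval t p)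
      (fun t _ => (Polynomial.differentiable p).differentiableAt)
      (fun t ht => by rw [Polynomial.deriv]; exact hM t ht) (convex_Icc a b) hx hy
    simpa [Real.norm_eq_abs] using this
  obtain ⟨l, hl⟩ := exists_nat_gt (max (1 / (b - a)) ((n + M + 1) * 4 / ε))
  have hl1 : 1 / (b - a) < l := lt_of_le_of_lt (le_max_left _ _) hl
  have hl2 : (n + M + 1) * 4 / ε < l := lt_of_le_of_lt (le_max_right _ _) hl
  have hlpos : 0 < (l : ℝ) := lt_of_le_of_lt (by positivity) hl1
  set c := ε / 4 with hc
  have hcpos : 0 < c := by positivity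
  set K := c * l with hK
  have hKM : (n : ℝ) + M < K := by
    have : (n + M + 1) * 4 < ε * l := by
      rw [div_lt_iff₀ (by positivity)] at hl2; linarith [hl2]
    have : (n : ℝ) + M + 1 < K := by rw [hK, hc]; linarith
    linarith
  have hhalf : 1 / (2 * l) < (b - a) / 2 := by
    have h1 : 1 < (l : ℝ) * (b - a) := by
      rw [div_lt_iff₀ hba] at hl1; linarith
    rw [div_lt_div_iff₀ (by positivity) two_pos]
    nlinarith
  set s : C(Set.Icc a b, ℝ) :=
    ⟨fun y => c * φ (l * y),
      continuous_const.mul (φ_cont.comp (continuous_const.mul continuous_subtype_val))⟩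
      with hsdef
  set g := pC + s with hg
  have hsapp : ∀ y : Set.Icc a b, s y = c * φ (l * y) := fun y => rfl
  have hgapp : ∀ y : Set.Icc a b, g y = Polynomial.eval (y : ℝ) p + c * φ (l * y) := by
    intro y; rw [hg]; rfl
  refine ⟨g, Set.mem_inter ?_ ?_⟩
  · -- g ∈ ball f ε
    rw [Metric.mem_ball]
    have h1 : dist g pC ≤ c / 2 := by
      rw [dist_eq_norm, hg, add_sub_cancel_left]
      rw [ContinuousMap.norm_le _ (by positivity)]
      intro y
      rw [hsapp]
      rw [Real.norm_eq_abs, abs_mul, abs_of_pos hcpos]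
      calc c * |φ (l * y)| ≤ c * (1 / 2) := by
            apply mul_le_mul_of_nonneg_left _ hcpos.le
            rw [abs_of_nonneg (φ_nonneg _)]; exact φ_le_half _
        _ = c / 2 := by ring
    have h2 : dist pC f < ε / 2 := by rw [dist_eq_norm]; exact hp
    calc dist g f ≤ dist g pC + dist pC f := dist_triangle _ _ _
      _ < c / 2 + ε / 2 := by linarith
      _ ≤ ε := by rw [hc]; linarith
  · -- g ∉ E a b n
    rintro ⟨θ, hθ⟩
    have hθmem := θ.2
    have key : ∃ y : Set.Icc a b, (y : ℝ) ≠ θ ∧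
        (n : ℝ) * |(y : ℝ) - (θ : ℝ)| < |g y - g θ| := by
      rcases le_or_gt (θ : ℝ) ((a + b) / 2) with hside | hside
      · obtain ⟨u, hu1, hu2, hu3⟩ := exists_right (l * θ)
        set y' := u / l with hy'
        have hul : u = l * y' := by rw [hy']; field_simp [hlpos.ne']
        have hy1 : (θ : ℝ) < y' := by
          rw [hy', lt_div_iff₀ hlpos]; linarith [hu1]
        have hy2 : y' ≤ (θ : ℝ) + 1 / (2 * l) := by
          rw [hy', div_le_iff₀ hlpos]
          have : (θ : ℝ) * l + l * (1 / (2 * l)) = l * θ + 1 / 2 := by field_simp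
          nlinarith [hu2]
        have hyb : y' ≤ b := by
          have := hθmem.1
          linarith [hhalf]
        have hya : a ≤ y' := le_trans hθmem.1 hy1.le
        refine ⟨⟨y', hya, hyb⟩, by simpa using hy1.ne', ?_⟩
        have hslope : |s ⟨y', hya, hyb⟩ - s θ| = K * (y' - θ) := by
          rw [hsapp, hsapp]
          rw [show c * φ (l * ↑(⟨y', hya, hyb⟩ : Set.Icc a b)) - c * φ (l * θ)
            = c * (φ (l * y') - φ (l * θ)) by push_cast; ring]
          rw [abs_mul, abs_of_pos hcpos, ← hul, hu3, hK]
          rw [hul]; ring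
        have hpoly : |Polynomial.eval y' p - Polynomial.eval (θ : ℝ) p| ≤ M * (y' - θ) := by
          have h2 := hplip (θ : ℝ) hθmem y' ⟨hya, hyb⟩
          have h' : |y' - (θ : ℝ)| = y' - θ := abs_of_pos (by linarith)
          rw [h'] at h2; exact h2
        have hgl : (K - M) * (y' - θ) ≤ |g ⟨y', hya, hyb⟩ - g θ| := by
          rw [hgapp, hgapp]
          have : g ⟨y', hya, hyb⟩ - g θ = (c * φ (l * y') - c * φ (l * θ))
              + (Polynomial.eval y' p - Polynomial.eval (θ : ℝ) p) := by
            rw [hgapp, hgapp]; push_cast; ring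
          calc (K - M) * (y' - θ)
              ≤ |c * φ (l * ↑(⟨y', hya, hyb⟩ : Set.Icc a b)) - c * φ (l * θ)|
                - |Polynomial.eval y' p - Polynomial.eval (θ : ℝ) p| := by
                rw [hsapp, hsapp] at hslope
                rw [hslope]; nlinarith [hpoly]
            _ ≤ |g ⟨y', hya, hyb⟩ - g θ| := by
                rw [hgapp, hgapp]
                push_cast
                have hrw : Polynomial.eval y' p + c * φ (l * y')
                    - (Polynomial.eval (θ:ℝ) p + c * φ (l * θ))
                    = (c * φ (l * y') - c * φ (l * θ))
                      - -(Polynomial.eval y' p - Polynomial.eval (θ : ℝ) p) := by ring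
                rw [hrw]
                have habs := abs_sub_abs_le_abs_sub
                  (c * φ (l * y') - c * φ (l * θ))
                  (-(Polynomial.eval y' p - Polynomial.eval (θ : ℝ) p))
                rw [abs_neg] at habs
                exact habs
        rw [show |y' - (θ : ℝ)| = y' - θ by rw [abs_of_pos]; linarith]
        calc (n : ℝ) * (y' - θ) < (K - M) * (y' - θ) := by nlinarith [hKM]
          _ ≤ _ := hgl
      · obtain ⟨u, hu2, hu1, hu3⟩ := exists_left (l * θ)
        set y' := u / l with hy'
        have hul : u = l * y' := by rw [hy']; field_simp [hlpos.ne']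
        have hy1 : y' < (θ : ℝ) := by
          rw [hy', div_lt_iff₀ hlpos]; linarith [hu1]
        have hy2 : (θ : ℝ) - 1 / (2 * l) ≤ y' := by
          rw [hy', le_div_iff₀ hlpos]
          have : ((θ : ℝ) - 1 / (2 * l)) * l = l * θ - 1 / 2 := by field_simp
          nlinarith [hu2]
        have hya : a ≤ y' := by
          have := hθmem.2
          linarith [hhalf]
        have hyb : y' ≤ b := le_trans hy1.le hθmem.2
        refine ⟨⟨y', hya, hyb⟩, by simpa using hy1.ne, ?_⟩
        have hslope : |s ⟨y', hya, hyb⟩ - s θ| = K * (θ - y') := by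
          rw [hsapp, hsapp]
          rw [show c * φ (l * ↑(⟨y', hya, hyb⟩ : Set.Icc a b)) - c * φ (l * θ)
            = c * (φ (l * y') - φ (l * θ)) by push_cast; ring]
          rw [abs_mul, abs_of_pos hcpos, ← hul, hu3, hK]
          rw [hul]; ring
        have hpoly : |Polynomial.eval y' p - Polynomial.eval (θ : ℝ) p| ≤ M * (θ - y') := by
          have h2 := hplip (θ : ℝ) hθmem y' ⟨hya, hyb⟩
          have h' : |y' - (θ : ℝ)| = (θ : ℝ) - y' := by
            rw [abs_of_neg (by linarith)]; ring
          rw [h'] at h2; exact h2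
        have hgl : (K - M) * ((θ : ℝ) - y') ≤ |g ⟨y', hya, hyb⟩ - g θ| := by
          calc (K - M) * ((θ : ℝ) - y')
              ≤ |c * φ (l * ↑(⟨y', hya, hyb⟩ : Set.Icc a b)) - c * φ (l * θ)|
                - |Polynomial.eval y' p - Polynomial.eval (θ : ℝ) p| := by
                rw [hsapp, hsapp] at hslope
                rw [hslope]; nlinarith [hpoly]
            _ ≤ |g ⟨y', hya, hyb⟩ - g θ| := by
                rw [hgapp, hgapp]
                push_cast
                have hrw : Polynomial.eval y' p + c * φ (l * y')
                    - (Polynomial.eval (θ:ℝ) p + c * φ (l * θ))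
                    = (c * φ (l * y') - c * φ (l * θ))
                      - -(Polynomial.eval y' p - Polynomial.eval (θ : ℝ) p) := by ring
                rw [hrw]
                have habs := abs_sub_abs_le_abs_sub
                  (c * φ (l * y') - c * φ (l * θ))
                  (-(Polynomial.eval y' p - Polynomial.eval (θ : ℝ) p))
                rw [abs_neg] at habs
                exact habs
        rw [show |y' - (θ : ℝ)| = (θ : ℝ) - y' by rw [abs_of_neg] <;> linarith]
        calc (n : ℝ) * ((θ : ℝ) - y') < (K - M) * ((θ : ℝ) - y') := by nlinarith [hKM]
          _ ≤ _ := hgl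
    obtain ⟨y, hyne, hylt⟩ := key
    exact absurd (hθ y) (not_le.mpr hylt)

end BM


set_option maxHeartbeats 1000000 in
/-- **Banach–Mazurkiewicz.** For a compact interval `J = [a,b]` with more than one point,
the set of continuous real-valued functions on `J` that are differentiable at no point of `J`
(i.e. for every `θ ∈ J` the limit of the difference quotient as `y → θ` within `J` does not
exist) is residual in `C(J, ℝ)`: it contains a `Gδ` dense subset. -/
theorem residual_nowhere_differentiable_on_interval (a b : ℝ) (hab : a < b) :
    ∃ S : Set C(Set.Icc a b, ℝ),
      S ⊆ {f : C(Set.Icc a b, ℝ) | ∀ θ : Set.Icc a b, ¬ ∃ L : ℝ,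
            Filter.Tendsto (fun y : Set.Icc a b => (f y - f θ) / ((y : ℝ) - (θ : ℝ)))
              (nhdsWithin θ {θ}ᶜ) (nhds L)} ∧
      IsGδ S ∧ Dense S := by
  refine ⟨⋂ n : ℕ, (BM.E a b n)ᶜ, ?_, ?_, ?_⟩
  · intro f hf
    simp only [Set.mem_iInter, Set.mem_compl_iff] at hf
    intro θ
    rintro ⟨L, hL⟩
    have h1 : ∀ᶠ y in nhdsWithin θ {θ}ᶜ,
        dist ((f y - f θ) / ((y : ℝ) - (θ : ℝ))) L < 1 :=
      Metric.tendsto_nhds.mp hL 1 one_pos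
    obtain ⟨δ, hδ, hball⟩ := Metric.mem_nhdsWithin_iff.mp h1
    obtain ⟨n, hn⟩ := exists_nat_ge (max (|L| + 1) (2 * ‖f‖ / δ))
    apply hf n
    refine ⟨θ, fun y => ?_⟩
    rcases eq_or_ne y θ with rfl | hy
    · simp
    · have hyθ : (y : ℝ) ≠ (θ : ℝ) := fun h => hy (Subtype.ext h)
      have habs : 0 < |(y : ℝ) - (θ : ℝ)| := by rwa [abs_pos, sub_ne_zero]
      rcases lt_or_ge (dist y θ) δ with hcase | hcase
      · have hmem : y ∈ Metric.ball θ δ ∩ {θ}ᶜ :=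
          ⟨Metric.mem_ball.mpr hcase, Set.mem_compl_singleton_iff.mpr hy⟩
        have hd := hball hmem
        simp only [Set.mem_setOf_eq, Real.dist_eq] at hd
        have hq : |(f y - f θ) / ((y : ℝ) - (θ : ℝ))| < |L| + 1 := by
          have htri : |(f y - f θ) / ((y : ℝ) - (θ : ℝ))|
              ≤ |(f y - f θ) / ((y : ℝ) - (θ : ℝ)) - L| + |L| := by
            have h3 := abs_add_le ((f y - f θ) / ((y : ℝ) - (θ : ℝ)) - L) L
            simpa using h3
          linarith
        rw [abs_div, div_lt_iff₀ habs] at hq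
        have hle : (|L| + 1) ≤ (n : ℝ) := (le_max_left _ _).trans hn
        calc |f y - f θ| ≤ (|L| + 1) * |(y : ℝ) - (θ : ℝ)| := hq.le
          _ ≤ (n : ℝ) * |(y : ℝ) - (θ : ℝ)| :=
            mul_le_mul_of_nonneg_right hle (abs_nonneg _)
      · have h2C : |f y - f θ| ≤ 2 * ‖f‖ := by
          calc |f y - f θ| ≤ |f y| + |f θ| := abs_sub _ _

            _ ≤ ‖f‖ + ‖f‖ := add_le_add (f.norm_coe_le_norm y) (f.norm_coe_le_norm θ)
            _ = 2 * ‖f‖ := by ring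
        have hδy : δ ≤ |(y : ℝ) - (θ : ℝ)| := by
          rw [Subtype.dist_eq, Real.dist_eq] at hcase; exact hcase
        have hnd : 2 * ‖f‖ / δ ≤ (n : ℝ) := (le_max_right _ _).trans hn
        have hdiv_nn : 0 ≤ 2 * ‖f‖ / δ := by positivity
        calc |f y - f θ| ≤ 2 * ‖f‖ := h2C
          _ = (2 * ‖f‖ / δ) * δ := by field_simp
          _ ≤ (2 * ‖f‖ / δ) * |(y : ℝ) - (θ : ℝ)| :=
            mul_le_mul_of_nonneg_left hδy hdiv_nn
          _ ≤ (n : ℝ) * |(y : ℝ) - (θ : ℝ)| :=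
            mul_le_mul_of_nonneg_right hnd (abs_nonneg _)
  · exact IsGδ.iInter fun n => ((BM.isClosed_E a b hab n).isOpen_compl).isGδ
  · exact dense_iInter_of_isOpen
      (fun n => (BM.isClosed_E a b hab n).isOpen_compl)
      (fun n => BM.dense_compl_E a b hab n)
end

section
/- The set E of all f ∈ A(D) such that the 2π-periodic function θ ↦ Re f(e^{iθ}) is differentiable at no point θ ∈ ℝ is residual in A(D), i.e. it contains a subset that is a countable intersection of open sets and is dense in A(D). -/
open Complex Metric Set Filter

/-- The disc algebra `A(D)`: continuous functions on the closed unit disc that admit an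
extension which is holomorphic on the open unit disc. -/
noncomputable def discAlgebra : Set C(Metric.closedBall (0:ℂ) 1, ℂ) :=
  {f | ∃ F : ℂ → ℂ, (∀ z : Metric.closedBall (0:ℂ) 1, F z = f z) ∧
       DifferentiableOn ℂ F (Metric.ball 0 1)}

/-- The boundary point `e^{iθ}` of the closed unit disc. -/
noncomputable def bdry (θ : ℝ) : Metric.closedBall (0:ℂ) 1 :=
  ⟨Complex.exp (θ * Complex.I), by
    simp [Metric.mem_closedBall, Complex.dist_eq, Complex.norm_exp_ofReal_mul_I]⟩


namespace NDA
open scoped Real Topology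

instance : CompactSpace (Metric.closedBall (0:ℂ) 1) :=
  isCompact_iff_compactSpace.mp (isCompact_closedBall _ _)

noncomputable def u (f : C(Metric.closedBall (0:ℂ) 1, ℂ)) (x : ℝ) : ℝ := (f (bdry x)).re

lemma continuous_bdry : Continuous bdry := by
  apply Continuous.subtype_mk
  exact Complex.continuous_exp.comp (by continuity)

lemma continuous_u (f : C(Metric.closedBall (0:ℂ) 1, ℂ)) : Continuous (u f) :=
  Complex.continuous_re.comp (f.continuous.comp continuous_bdry)

lemma periodic_u (f : C(Metric.closedBall (0:ℂ) 1, ℂ)) : Function.Periodic (u f) (2*π) := by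
  intro x
  have : bdry (x + 2*π) = bdry x := by
    apply Subtype.ext
    simp only [bdry]
    push_cast
    rw [add_mul, Complex.exp_add]
    simp [Complex.exp_two_pi_mul_I]
  simp [u, this]

lemma abs_u_sub_u_le (f g : C(Metric.closedBall (0:ℂ) 1, ℂ)) (x : ℝ) :
    |u f x - u g x| ≤ dist f g := by
  have h1 : |u f x - u g x| ≤ dist (f (bdry x)) (g (bdry x)) := by
    rw [Complex.dist_eq]
    simpa [u, Complex.sub_re] using Complex.abs_re_le_norm (f (bdry x) - g (bdry x))
  exact h1.trans (ContinuousMap.dist_apply_le_dist _)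

lemma abs_u_le (f : C(Metric.closedBall (0:ℂ) 1, ℂ)) (x : ℝ) : |u f x| ≤ ‖f‖ :=
  (Complex.abs_re_le_norm _).trans (f.norm_coe_le_norm _)

end NDA

namespace NDA
open scoped Real Topology

/-- The "bad" set: functions whose boundary real trace is Lipschitz-`n` at some point of
`[0, 2π]`. -/
def E (n : ℕ) : Set discAlgebra :=
  {f | ∃ θ ∈ Icc (0:ℝ) (2*π), ∀ h : ℝ, |u f.1 (θ+h) - u f.1 θ| ≤ n * |h|}

lemma tendsto_u {f : ℕ → discAlgebra} {f₀ : discAlgebra} (hf : Tendsto f atTop (𝓝 f₀))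
    {x : ℕ → ℝ} {x₀ : ℝ} (hx : Tendsto x atTop (𝓝 x₀)) :
    Tendsto (fun j => u (f j).1 (x j)) atTop (𝓝 (u f₀.1 x₀)) := by
  rw [tendsto_iff_dist_tendsto_zero]
  have hb : ∀ j, dist (u (f j).1 (x j)) (u f₀.1 x₀) ≤
      dist (f j) f₀ + dist (u f₀.1 (x j)) (u f₀.1 x₀) := by
    intro j
    calc dist (u (f j).1 (x j)) (u f₀.1 x₀)
        ≤ dist (u (f j).1 (x j)) (u f₀.1 (x j)) + dist (u f₀.1 (x j)) (u f₀.1 x₀) :=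
          dist_triangle _ _ _
      _ ≤ dist (f j) f₀ + dist (u f₀.1 (x j)) (u f₀.1 x₀) := by
          gcongr
          rw [Real.dist_eq, Subtype.dist_eq]
          exact abs_u_sub_u_le _ _ _
  have h1 : Tendsto (fun j => dist (f j) f₀) atTop (𝓝 0) :=
    tendsto_iff_dist_tendsto_zero.mp hf
  have h2 : Tendsto (fun j => dist (u f₀.1 (x j)) (u f₀.1 x₀)) atTop (𝓝 0) := by
    have := ((continuous_u f₀.1).tendsto x₀).comp hx
    exact tendsto_iff_dist_tendsto_zero.mp this
  have := h1.add h2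
  rw [add_zero] at this
  exact squeeze_zero (fun j => dist_nonneg) hb this

lemma isClosed_E (n : ℕ) : IsClosed (E n) := by
  apply IsSeqClosed.isClosed
  intro f f₀ hf hlim
  choose θ hθI hθ using hf
  obtain ⟨θ₀, hθ₀I, φ, hφ, hθlim⟩ :=
    (isCompact_Icc (a := (0:ℝ)) (b := 2*π)).tendsto_subseq hθI
  refine ⟨θ₀, hθ₀I, fun h => ?_⟩
  have hsub : Tendsto (fun j => f (φ j)) atTop (𝓝 f₀) := hlim.comp hφ.tendsto_atTop
  have k1 : Tendsto (fun j => u (f (φ j)).1 (θ (φ j) + h)) atTop (𝓝 (u f₀.1 (θ₀ + h))) :=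
    tendsto_u hsub (hθlim.add tendsto_const_nhds)
  have k2 : Tendsto (fun j => u (f (φ j)).1 (θ (φ j))) atTop (𝓝 (u f₀.1 θ₀)) :=
    tendsto_u hsub hθlim
  exact le_of_tendsto ((k1.sub k2).abs) (Filter.Eventually.of_forall fun j => hθ (φ j) h)

lemma isClosed_discAlgebra : IsClosed discAlgebra := by
  apply IsSeqClosed.isClosed
  intro f f₀ hf hlim
  choose F hF1 hF2 using hf
  classical
  refine ⟨fun z => if h : z ∈ Metric.closedBall (0:ℂ) 1 then f₀ ⟨z, h⟩ else 0, ?_, ?_⟩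
  · intro z
    simp [z.2]
  · have hTU : TendstoUniformlyOn (fun k z => F k z)
        (fun z => if h : z ∈ Metric.closedBall (0:ℂ) 1 then f₀ ⟨z, h⟩ else 0) atTop
        (Metric.ball (0:ℂ) 1) := by
      rw [Metric.tendstoUniformlyOn_iff]
      intro ε hε
      have : Tendsto (fun k => dist (f k) f₀) atTop (𝓝 0) :=
        tendsto_iff_dist_tendsto_zero.mp hlim
      filter_upwards [this.eventually (gt_mem_nhds hε)] with k hk z hz
      have hz' : z ∈ Metric.closedBall (0:ℂ) 1 := Metric.ball_subset_closedBall hz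
      rw [dif_pos hz', hF1 k ⟨z, hz'⟩]
      calc dist (f₀ ⟨z, hz'⟩) (f k ⟨z, hz'⟩) ≤ dist f₀ (f k) :=
            ContinuousMap.dist_apply_le_dist _
        _ = dist (f k) f₀ := dist_comm _ _
        _ < ε := hk
    exact hTU.tendstoLocallyUniformlyOn.differentiableOn
      (Filter.Eventually.of_forall fun k => hF2 k) isOpen_ball

instance : CompleteSpace discAlgebra := isClosed_discAlgebra.completeSpace_coe

end NDA

namespace NDA
open scoped Real Topology

lemma pow_lip (a b : ℂ) (ha : ‖a‖ ≤ 1) (hb : ‖b‖ ≤ 1) (k : ℕ) :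
    ‖(a^k - b^k)‖ ≤ k * ‖(a - b)‖ := by
  induction k with
  | zero => simp
  | succ k ih =>
    have : a^(k+1) - b^(k+1) = a^k * (a - b) + (a^k - b^k) * b := by ring
    rw [this]
    calc ‖(a^k * (a - b) + (a^k - b^k) * b)‖
        ≤ ‖(a^k * (a - b))‖ + ‖((a^k - b^k) * b)‖ := norm_add_le _ _
      _ = ‖a‖ ^ k * ‖(a - b)‖ + ‖(a^k - b^k)‖ * ‖b‖ := by
          simp [map_mul, map_pow]
      _ ≤ 1 * ‖(a - b)‖ + (k * ‖(a - b)‖) * 1 := by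
          gcongr <;>
            first
              | exact pow_le_one₀ (norm_nonneg a) ha
              | exact ih
              | exact hb
              | positivity
      _ = (k+1 : ℕ) * ‖(a - b)‖ := by push_cast; ring

lemma dist_exp_I_le (a b : ℝ) :
    dist (Complex.exp (a*Complex.I)) (Complex.exp (b*Complex.I)) ≤ |a - b| := by
  have := (lipschitzWith_circleMap 0 1).dist_le_mul a b
  simpa [circleMap, Real.dist_eq] using this

end NDA

namespace NDA
open scoped Real Topology

lemma exists_lip (f : discAlgebra) {ε : ℝ} (hε : 0 < ε) :
    ∃ p : discAlgebra, dist p f < ε ∧ ∃ L : ℝ, 0 ≤ L ∧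
      ∀ a b : ℝ, |u p.1 a - u p.1 b| ≤ L * |a - b| := by
  obtain ⟨F, hF1, hF2⟩ := f.2
  -- uniform continuity of f
  obtain ⟨δ, hδ, huc⟩ := Metric.uniformContinuous_iff.mp
    (CompactSpace.uniformContinuous_of_continuous f.1.continuous) (ε/2) (by positivity)
  -- the dilation radius
  set r : ℝ := max (1/2) (1 - δ/2) with hr_def
  have hr0 : 0 < r := lt_of_lt_of_le (by norm_num) (le_max_left _ _)
  have hr1 : r < 1 := by
    rw [hr_def]
    apply max_lt (by norm_num) (by linarith)
  have hrδ : 1 - r < δ := by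
    have : 1 - δ/2 ≤ r := le_max_right _ _
    linarith
  -- the dilated function
  set G : ℂ → ℂ := fun z => F (r * z) with hG_def
  set sR : ℝ := (1 + 1/r)/2 with hsR_def
  have h1r : 1 < 1/r := (one_lt_div hr0).mpr hr1
  have hs1 : 1 < sR := by rw [hsR_def]; linarith
  have hs0 : 0 < sR := by linarith
  have hrs : r * sR < 1 := by
    have : sR < 1/r := by rw [hsR_def]; linarith
    calc r * sR < r * (1/r) := by gcongr
      _ = 1 := by field_simp
  have hGd : DifferentiableOn ℂ G (Metric.closedBall (0:ℂ) sR.toNNReal) := by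
    apply DifferentiableOn.comp (t := Metric.ball (0:ℂ) 1) hF2
    · exact (differentiable_id.const_mul _).differentiableOn
    · intro z hz
      simp only [Metric.mem_closedBall, dist_zero_right] at hz
      simp only [Metric.mem_ball, dist_zero_right]
      have hz' : ‖z‖ ≤ sR := by
        rwa [Real.coe_toNNReal _ hs0.le] at hz
      calc ‖(r:ℂ) * z‖ = r * ‖z‖ := by
            rw [norm_mul]; simp [Complex.norm_real, abs_of_pos hr0]
        _ ≤ r * sR := by gcongr
        _ < 1 := hrs
  have hps := hGd.hasFPowerSeriesOnBall (by simpa using hs0)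
  set P := cauchyPowerSeries G 0 sR.toNNReal with hP_def
  set r' : NNReal := ⟨(1 + sR)/2, by positivity⟩ with hr'_def
  have hr'1 : (1:ℝ) < r' := by
    show (1:ℝ) < (1 + sR)/2
    linarith
  have hr's : (r' : ENNReal) < sR.toNNReal := by
    rw [ENNReal.coe_lt_coe]
    rw [← NNReal.coe_lt_coe]
    show ((1 + sR)/2 : ℝ) < sR.toNNReal
    rw [Real.coe_toNNReal _ hs0.le]
    linarith
  have hTU := hps.tendstoUniformlyOn' hr's
  rw [Metric.tendstoUniformlyOn_iff] at hTU
  obtain ⟨m, hm⟩ := (hTU (ε/2) (by positivity)).exists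
  set Q : ℂ → ℂ := fun y => P.partialSum m y with hQ_def
  have hQeq : Q = fun y => ∑ k ∈ Finset.range m, y^k • P.coeff k := by
    funext y
    simp [hQ_def, FormalMultilinearSeries.partialSum,
      FormalMultilinearSeries.apply_eq_pow_smul_coeff]
  have hQdiff : Differentiable ℂ Q := by
    rw [hQeq]
    exact Differentiable.fun_sum fun k _ => (differentiable_pow k : Differentiable ℂ fun y : ℂ => y ^ k).smul_const _
  set L : ℝ := ∑ k ∈ Finset.range m, (k : ℝ) * ‖(P.coeff k)‖ with hL_def
  have hL0 : 0 ≤ L := Finset.sum_nonneg fun k _ => by positivity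
  have hQlip : ∀ y w : ℂ, ‖y‖ ≤ 1 → ‖w‖ ≤ 1 →
      ‖(Q y - Q w)‖ ≤ L * ‖(y - w)‖ := by
    intro y w hy hw
    rw [hQeq]
    simp only
    rw [← Finset.sum_sub_distrib]
    calc ‖(∑ k ∈ Finset.range m, (y^k • P.coeff k - w^k • P.coeff k))‖
        ≤ ∑ k ∈ Finset.range m, ‖(y^k • P.coeff k - w^k • P.coeff k)‖ := by
          exact norm_sum_le _ _
      _ ≤ ∑ k ∈ Finset.range m, ((k : ℝ) * ‖(P.coeff k)‖) * ‖(y - w)‖ := by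
          apply Finset.sum_le_sum
          intro k _
          have : y^k • P.coeff k - w^k • P.coeff k = (y^k - w^k) * P.coeff k := by
            simp [smul_eq_mul]; ring
          rw [this, norm_mul]
          calc ‖(y^k - w^k)‖ * ‖(P.coeff k)‖
              ≤ ((k:ℝ) * ‖(y - w)‖) * ‖(P.coeff k)‖ := by
                gcongr
                exact pow_lip y w hy hw k
            _ = ((k : ℝ) * ‖(P.coeff k)‖) * ‖(y - w)‖ := by ring
      _ = L * ‖(y - w)‖ := by rw [hL_def, Finset.sum_mul]
  -- the approximating element of the disc algebra
  set pC : C(Metric.closedBall (0:ℂ) 1, ℂ) :=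
    ContinuousMap.mk (fun z => Q z.1) (hQdiff.continuous.comp continuous_subtype_val) with hpC_def
  refine ⟨⟨pC, ⟨Q, fun z => rfl, hQdiff.differentiableOn⟩⟩, ?_, L, hL0, ?_⟩
  · rw [Subtype.dist_eq, ContinuousMap.dist_lt_iff hε]
    intro z
    have hz1 : ‖z.1‖ ≤ 1 := by
      have h := z.2
      rw [Metric.mem_closedBall, Complex.dist_eq, sub_zero] at h
      exact h
    have d1 : dist (Q z.1) (G z.1) < ε/2 := by
      have hzball : z.1 ∈ Metric.ball (0:ℂ) r' := by
        simp only [Metric.mem_ball, dist_zero_right]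
        calc ‖z.1‖ ≤ 1 := by exact hz1
          _ < r' := hr'1
      have := hm z.1 hzball
      rw [dist_comm]
      simpa using this
    have d2 : dist (G z.1) (f.1 z) < ε/2 := by
      have hmem : (r : ℂ) * z.1 ∈ Metric.closedBall (0:ℂ) 1 := by
        simp only [Metric.mem_closedBall, dist_zero_right]
        calc ‖(r:ℂ) * z.1‖ = r * ‖z.1‖ := by
              rw [norm_mul]; simp [abs_of_pos hr0]
          _ ≤ r * 1 := mul_le_mul_of_nonneg_left
              (by exact hz1) hr0.le
          _ ≤ 1 := by linarith
      have hGz : G z.1 = f.1 ⟨(r:ℂ) * z.1, hmem⟩ := hF1 ⟨(r:ℂ)*z.1, hmem⟩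
      rw [hGz]
      apply huc
      rw [Subtype.dist_eq]
      show dist ((r:ℂ) * z.1) z.1 < δ
      rw [Complex.dist_eq]
      have : (r:ℂ) * z.1 - z.1 = (r - 1 : ℝ) * z.1 := by push_cast; ring
      rw [this, norm_mul]
      calc ‖((r - 1 : ℝ):ℂ)‖ * ‖z.1‖ ≤ (1 - r) * 1 := by
            rw [Complex.norm_real, Real.norm_eq_abs, abs_of_nonpos (by linarith)]
            gcongr <;> linarith
        _ < δ := by linarith
    calc dist (pC z) (f.1 z)
        ≤ dist (Q z.1) (G z.1) + dist (G z.1) (f.1 z) := dist_triangle _ _ _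
      _ < ε/2 + ε/2 := by exact add_lt_add d1 d2
      _ = ε := by ring
  · intro a b
    have he : ∀ x : ℝ, ‖((bdry x : ℂ))‖ ≤ 1 := by
      intro x
      have h := (bdry x).2
      rw [Metric.mem_closedBall, Complex.dist_eq, sub_zero] at h
      exact h
    have h1 : |u pC a - u pC b| ≤ ‖(Q (bdry a).1 - Q (bdry b).1)‖ := by
      simp only [u, hpC_def, ContinuousMap.coe_mk]
      simpa [Complex.sub_re] using Complex.abs_re_le_norm (Q (bdry a).1 - Q (bdry b).1)
    refine h1.trans ?_
    calc ‖(Q (bdry a).1 - Q (bdry b).1)‖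
        ≤ L * ‖((bdry a).1 - (bdry b).1)‖ := hQlip _ _ (he a) (he b)
      _ ≤ L * |a - b| := by
          apply mul_le_mul_of_nonneg_left _ hL0
          have h2 := dist_exp_I_le a b
          rw [Complex.dist_eq] at h2
          exact h2

end NDA

namespace NDA
open scoped Real Topology

/-- For any `θ` and frequency `N ≥ 1`, within distance `2π/N` to the right of `θ` the
function `x ↦ N·x` hits `a + 2πℤ`. -/
lemma exists_hit (N : ℕ) (hN : 0 < N) (θ a : ℝ) :
    ∃ h : ℝ, 0 < h ∧ h ≤ 2*π/N ∧ ∃ k : ℤ, (N:ℝ)*(θ+h) = a + k * (2*π) := by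
  have hπ : (0:ℝ) < 2*π := by positivity
  have hN' : (0:ℝ) < N := by exact_mod_cast hN
  set y : ℝ := ((N:ℝ)*θ - a)/(2*π) with hy
  refine ⟨(a + (⌊y⌋+1) * (2*π) - N*θ)/N, ?_, ?_, ⌊y⌋+1, ?_⟩
  · apply div_pos _ hN'
    have h1 : y < (⌊y⌋:ℝ) + 1 := Int.lt_floor_add_one y
    have h2 : (N:ℝ)*θ - a = y * (2*π) := by rw [hy]; field_simp
    have : ((⌊y⌋:ℝ)+1) * (2*π) > y * (2*π) := by gcongr
    push_cast
    linarith
  · rw [div_le_div_iff_of_pos_right hN']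
    have h1 : (⌊y⌋:ℝ) ≤ y := Int.floor_le y
    have h2 : (N:ℝ)*θ - a = y * (2*π) := by rw [hy]; field_simp
    have : ((⌊y⌋:ℝ)+1) * (2*π) ≤ (y+1) * (2*π) := by gcongr
    push_cast
    linarith [this, h2]
  · push_cast
    field_simp
    ring

lemma dense_compl_E (n : ℕ) : Dense (E n)ᶜ := by
  rw [Metric.dense_iff]
  intro f ε hε
  obtain ⟨p, hpf, L, hL0, hLip⟩ := exists_lip f (by positivity : (0:ℝ) < ε/2)
  obtain ⟨P, hP1, hP2⟩ := p.2
  have hπ : (0:ℝ) < π := Real.pi_pos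
  -- choose the frequency
  set N : ℕ := ⌈8*π*((n:ℝ)+L)/ε⌉₊ + 1 with hN_def
  have hN0 : 0 < N := Nat.succ_pos _
  have hNbig : 8*π*((n:ℝ)+L)/ε < N := by
    calc 8*π*((n:ℝ)+L)/ε ≤ ⌈8*π*((n:ℝ)+L)/ε⌉₊ := Nat.le_ceil _
      _ < N := by exact_mod_cast Nat.lt_succ_self _
  set c : ℝ := ε/4 with hc_def
  have hc0 : 0 < c := by positivity
  -- the perturbed function
  set gC : C(Metric.closedBall (0:ℂ) 1, ℂ) :=
    ContinuousMap.mk (fun z => p.1 z + c * z.1 ^ N)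
      (by continuity) with hgC_def
  have hgmem : gC ∈ discAlgebra := by
    refine ⟨fun z => P z + c * z ^ N, fun z => by simp [hgC_def, hP1 z], ?_⟩
    exact hP2.add ((differentiable_const _ |>.mul (differentiable_pow N)).differentiableOn)
  set g : discAlgebra := ⟨gC, hgmem⟩ with hg_def
  have hug : ∀ x : ℝ, u gC x = u p.1 x + c * Real.cos (N * x) := by
    intro x
    have hpow : ((bdry x : ℂ)) ^ N = Complex.exp ((N*x : ℝ) * Complex.I) := by
      show (Complex.exp ((x:ℝ) * Complex.I)) ^ N = _
      rw [← Complex.exp_nat_mul]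
      push_cast
      ring_nf
    simp only [u, hgC_def, ContinuousMap.coe_mk]
    rw [Complex.add_re, hpow]
    congr 1
    have : ((c:ℂ) * Complex.exp ((N*x : ℝ) * Complex.I)).re
        = c * (Complex.exp ((N*x : ℝ) * Complex.I)).re := by
      rw [Complex.re_ofReal_mul]
    rw [this, Complex.exp_ofReal_mul_I_re]
  refine ⟨g, ?_, ?_⟩
  · -- g is in the ball around f
    rw [Metric.mem_ball]
    have hgp : dist g p ≤ c := by
      rw [Subtype.dist_eq, ContinuousMap.dist_le hc0.le]
      intro z
      have hz1 : ‖z.1‖ ≤ 1 := by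
        have h := z.2
        rw [Metric.mem_closedBall, Complex.dist_eq, sub_zero] at h
        exact h
      show dist (p.1 z + (c:ℂ) * z.1 ^ N) (p.1 z) ≤ c
      rw [dist_eq_norm]
      simp only [add_sub_cancel_left]
      rw [norm_mul, norm_pow]
      calc ‖(c:ℂ)‖ * ‖z.1‖^N ≤ ‖(c:ℂ)‖ * 1 := by
            apply mul_le_mul_of_nonneg_left _ (norm_nonneg _)
            apply pow_le_one₀ (norm_nonneg _)
            exact hz1
        _ = c := by rw [mul_one, Complex.norm_real, Real.norm_eq_abs, abs_of_pos hc0]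
    calc dist g f ≤ dist g p + dist p f := dist_triangle _ _ _
      _ ≤ c + dist p f := by gcongr
      _ < ε/4 + ε/2 := by rw [hc_def]; gcongr
      _ < ε := by linarith
  · -- g is not in E n
    intro hgE
    obtain ⟨θ, hθI, hθ⟩ := hgE
    -- two oscillation points
    obtain ⟨h₁, hh₁0, hh₁le, k₁, hk₁⟩ := exists_hit N hN0 θ 0
    obtain ⟨h₂, hh₂0, hh₂le, k₂, hk₂⟩ := exists_hit N hN0 θ π
    have hcos₁ : Real.cos ((N:ℝ)*(θ+h₁)) = 1 := by
      rw [hk₁, zero_add]; exact Real.cos_int_mul_two_pi k₁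
    have hcos₂ : Real.cos ((N:ℝ)*(θ+h₂)) = -1 := by
      rw [hk₂, add_comm]; exact Real.cos_int_mul_two_pi_add_pi k₂
    -- the key estimate at each point
    have key : ∀ h : ℝ, 0 < h → h ≤ 2*π/N →
        c * |Real.cos ((N:ℝ)*(θ+h)) - Real.cos ((N:ℝ)*θ)| ≤ ((n:ℝ) + L) * (2*π/N) := by
      intro h hh0 hhle
      have e1 : u gC (θ+h) - u gC θ
          = (u p.1 (θ+h) - u p.1 θ) + c * (Real.cos ((N:ℝ)*(θ+h)) - Real.cos ((N:ℝ)*θ)) := by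
        rw [hug, hug]
        push_cast
        ring
      have e2 : c * |Real.cos ((N:ℝ)*(θ+h)) - Real.cos ((N:ℝ)*θ)|
          ≤ |u gC (θ+h) - u gC θ| + |u p.1 (θ+h) - u p.1 θ| := by
        have : c * (Real.cos ((N:ℝ)*(θ+h)) - Real.cos ((N:ℝ)*θ))
            = (u gC (θ+h) - u gC θ) - (u p.1 (θ+h) - u p.1 θ) := by rw [e1]; ring
        calc c * |Real.cos ((N:ℝ)*(θ+h)) - Real.cos ((N:ℝ)*θ)|
            = |c * (Real.cos ((N:ℝ)*(θ+h)) - Real.cos ((N:ℝ)*θ))| := by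
              rw [abs_mul, abs_of_pos hc0]
          _ = |(u gC (θ+h) - u gC θ) - (u p.1 (θ+h) - u p.1 θ)| := by rw [this]
          _ ≤ _ := abs_sub _ _
      have e3 : |u gC (θ+h) - u gC θ| ≤ (n:ℝ) * h := by
        have := hθ h
        rwa [abs_of_pos hh0] at this
      have e4 : |u p.1 (θ+h) - u p.1 θ| ≤ L * h := by
        have := hLip (θ+h) θ
        simpa [abs_of_pos hh0] using this
      calc c * |Real.cos ((N:ℝ)*(θ+h)) - Real.cos ((N:ℝ)*θ)|
          ≤ (n:ℝ) * h + L * h := by linarith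
        _ = ((n:ℝ) + L) * h := by ring
        _ ≤ ((n:ℝ) + L) * (2*π/N) := by
            apply mul_le_mul_of_nonneg_left hhle (by positivity)
    have k1 := key h₁ hh₁0 hh₁le
    have k2 := key h₂ hh₂0 hh₂le
    rw [hcos₁] at k1
    rw [hcos₂] at k2
    -- |1 - c₀| + |-1 - c₀| ≥ 2
    set c₀ : ℝ := Real.cos ((N:ℝ)*θ) with hc₀
    have habs : 2 ≤ |1 - c₀| + |-1 - c₀| := by
      have := abs_sub_abs_le_abs_sub (1 - c₀) (-1 - c₀)
      have h2 : |(1 - c₀) - (-1 - c₀)| = 2 := by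
        have : (1 - c₀) - (-1 - c₀) = 2 := by ring
        rw [this]; norm_num
      calc (2:ℝ) = |(1 - c₀) - (-1 - c₀)| := h2.symm
        _ ≤ |1 - c₀| + |-1 - c₀| := abs_sub _ _
    have hsum : 2 * c ≤ 2 * (((n:ℝ) + L) * (2*π/N)) := by
      calc 2 * c = c * 2 := by ring
        _ ≤ c * (|1 - c₀| + |-1 - c₀|) := by
            apply mul_le_mul_of_nonneg_left habs hc0.le
        _ = c * |1 - c₀| + c * |-1 - c₀| := by ring
        _ ≤ ((n:ℝ) + L) * (2*π/N) + ((n:ℝ) + L) * (2*π/N) := add_le_add k1 k2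
        _ = 2 * (((n:ℝ) + L) * (2*π/N)) := by ring
    -- contradiction with the choice of N
    have hNR : (0:ℝ) < N := by exact_mod_cast hN0
    have hfinal : ((n:ℝ) + L) * (2*π/N) < c := by
      rw [hc_def]
      have h8 : 8*π*((n:ℝ)+L) < ε * N := by
        rw [div_lt_iff₀ hε] at hNbig
        linarith
      have he : ((n:ℝ)+L)*(2*π/N) = (2*π*((n:ℝ)+L))/N := by ring
      rw [he, div_lt_iff₀ hNR]
      linarith
    linarith

end NDA

open scoped Real

/-- The set `E` of `f ∈ A(D)` such that `θ ↦ Re f(e^{iθ})` is differentiable at no point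
`θ ∈ ℝ` is residual in `A(D)`: it contains a `Gδ` dense subset. -/
theorem residual_nowhere_differentiable_re :
    ∃ S : Set discAlgebra,
      S ⊆ {f : discAlgebra | ∀ θ : ℝ,
            ¬ DifferentiableAt ℝ (fun x : ℝ => (f.1 (bdry x)).re) θ} ∧
      IsGδ S ∧ Dense S := by
  refine ⟨⋂ n : ℕ, (NDA.E n)ᶜ, ?_, ?_, ?_⟩
  · intro f hf θ₀ hdiff
    have hπ : (0:ℝ) < 2*π := by positivity
    have hd : HasDerivAt (NDA.u f.1) (deriv (fun x : ℝ => (f.1 (bdry x)).re) θ₀) θ₀ :=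
      hdiff.hasDerivAt
    have hO := hd.isBigO_sub
    rw [Asymptotics.isBigO_iff] at hO
    obtain ⟨C, hC⟩ := hO
    rw [Metric.eventually_nhds_iff] at hC
    obtain ⟨δ, hδ0, hδ⟩ := hC
    set M : ℝ := ‖f.1‖ with hM_def
    have hM0 : 0 ≤ M := norm_nonneg _
    set n : ℕ := ⌈max C (2*M/δ)⌉₊ with hn_def
    have hmem : f ∈ NDA.E n := by
      set θ : ℝ := θ₀ - ⌊θ₀/(2*π)⌋ * (2*π) with hθ_def
      have hper : ∀ x : ℝ, NDA.u f.1 (x - ⌊θ₀/(2*π)⌋ * (2*π)) = NDA.u f.1 x := fun x =>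
        (NDA.periodic_u f.1).sub_int_mul_eq _
      refine ⟨θ, ⟨Int.sub_floor_div_mul_nonneg θ₀ hπ,
        le_of_lt (Int.sub_floor_div_mul_lt θ₀ hπ)⟩, fun h => ?_⟩
      have e1 : NDA.u f.1 (θ + h) = NDA.u f.1 (θ₀ + h) := by
        have : θ + h = (θ₀ + h) - ⌊θ₀/(2*π)⌋ * (2*π) := by rw [hθ_def]; ring
        rw [this, hper]
      have e2 : NDA.u f.1 θ = NDA.u f.1 θ₀ := hper θ₀
      rw [e1, e2]
      have hCn : C ≤ (n:ℝ) := (le_max_left _ _).trans (Nat.le_ceil _)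
      have hMn : 2*M/δ ≤ (n:ℝ) := (le_max_right _ _).trans (Nat.le_ceil _)
      rcases lt_or_ge |h| δ with hlt | hge
      · have := hδ (y := θ₀ + h) (by simpa [Real.dist_eq] using hlt)
        simp only [add_sub_cancel_left] at this
        rw [Real.norm_eq_abs, Real.norm_eq_abs] at this
        calc |NDA.u f.1 (θ₀ + h) - NDA.u f.1 θ₀| ≤ C * |h| := this
          _ ≤ (n:ℝ) * |h| := mul_le_mul_of_nonneg_right hCn (abs_nonneg _)
      · calc |NDA.u f.1 (θ₀ + h) - NDA.u f.1 θ₀|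
            ≤ |NDA.u f.1 (θ₀ + h)| + |NDA.u f.1 θ₀| := abs_sub _ _
          _ ≤ M + M := add_le_add (NDA.abs_u_le f.1 _) (NDA.abs_u_le f.1 _)
          _ = (2*M/δ) * δ := by field_simp; ring
          _ ≤ (2*M/δ) * |h| := by
              apply mul_le_mul_of_nonneg_left hge (by positivity)
          _ ≤ (n:ℝ) * |h| := mul_le_mul_of_nonneg_right hMn (abs_nonneg _)
    exact (Set.mem_iInter.mp hf n) hmem
  · exact IsGδ.iInter_of_isOpen fun n => (NDA.isClosed_E n).isOpen_compl
  · exact dense_iInter_of_isOpen (fun n => (NDA.isClosed_E n).isOpen_compl) NDA.dense_compl_E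
end
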